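/- In any parity game augmented with live groups, Player 0 has a positional (memoryless) winning strategy from every vertex of her winning region; in particular, if Player 0 has any winning strategy from a vertex v in the augmented game (G, Parity(ℙ), ψ_glive(ℋ)), then she has a positional one. -/

import Mathlib

universe u

/-- A two-player game graph: finite-intended vertex set `V`, an ownership function
(`owner v = 0` means `v` is a Player-0 vertex, `owner v = 1` a Player-1 vertex),
and an edge relation such that every vertex has at least one outgoing edge. -/
structure GameGraph (V : Type u) where
  owner : V → Fin 2
  E : V → V → Prop
  exists_succ : ∀ v, ∃ w, E v w

variable {V : Type u}

/-- A play of the game graph: an infinite sequence of vertices following edges. -/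
def IsPlay (G : GameGraph V) (ρ : ℕ → V) : Prop :=
  ∀ k, G.E (ρ k) (ρ (k + 1))

/-- A (history-dependent) strategy: given the list of previously visited
vertices and the current vertex, it chooses a next vertex. -/
abbrev Strategy (V : Type u) := List V → V → V

/-- A strategy of Player `i` is valid if at each Player-`i` vertex it chooses
an edge of the game graph. -/
def StratValid (G : GameGraph V) (i : Fin 2) (σ : Strategy V) : Prop :=
  ∀ (h : List V) (v : V), G.owner v = i → G.E v (σ h v)

/-- A positional (memoryless) strategy ignores the history. -/
def Positional (σ : Strategy V) : Prop :=
  ∀ (h h' : List V) (v : V), σ h v = σ h' v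

/-- A play is compliant with the strategy `σ` of Player `i` (a `σ`-play) if at
every Player-`i` vertex it moves to the vertex chosen by `σ`. -/
def Compliant (G : GameGraph V) (i : Fin 2) (σ : Strategy V) (ρ : ℕ → V) : Prop :=
  ∀ k, G.owner (ρ k) = i → ρ (k + 1) = σ (List.ofFn fun j : Fin k => ρ j.val) (ρ k)

/-- `σ` is a winning strategy for Player `i` from `v`, where `W` is the set of
plays that are winning for Player `i`. -/
def WinsFrom (G : GameGraph V) (i : Fin 2) (W : Set (ℕ → V)) (σ : Strategy V) (v : V) : Prop :=
  StratValid G i σ ∧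
    ∀ ρ : ℕ → V, IsPlay G ρ → Compliant G i σ ρ → ρ 0 = v → ρ ∈ W

/-- The winning region of Player `i`: the vertices from which Player `i` has a
winning strategy. -/
def WinRegion (G : GameGraph V) (i : Fin 2) (W : Set (ℕ → V)) : Set V :=
  {v | ∃ σ, WinsFrom G i W σ v}

/-- A vertex occurs infinitely often along a play. -/
def InfOft (ρ : ℕ → V) (v : V) : Prop := ∀ n, ∃ k, n ≤ k ∧ ρ k = v

/-- An edge is taken infinitely often along a play. -/
def EdgeInfOft (ρ : ℕ → V) (e : V × V) : Prop :=
  ∀ n, ∃ k, n ≤ k ∧ ρ k = e.1 ∧ ρ (k + 1) = e.2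

/-- Parity objective: the maximal priority occurring infinitely often is even. -/
def ParityWin (P : V → ℕ) (ρ : ℕ → V) : Prop :=
  ∃ v, InfOft ρ v ∧ Even (P v) ∧ ∀ w, InfOft ρ w → P w ≤ P v

/-- The set of source vertices of a set of edges. -/
def srcSet (H : Set (V × V)) : Set V := {u | ∃ w, (u, w) ∈ H}

/-- Group transition fairness (live group) assumption: for every live group `H`,
if some source vertex of `H` occurs infinitely often, then some edge of `H` is
taken infinitely often. -/
def psiGlive (Hc : Set (Set (V × V))) (ρ : ℕ → V) : Prop :=
  ∀ H ∈ Hc, (∃ u ∈ srcSet H, InfOft ρ u) → ∃ e ∈ H, EdgeInfOft ρ e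

/-!
The proof is an edge-splitting induction, which works for every objective `W` whose
complement is closed under interleaving: membership in `W` only depends on the vertices and edges
seen infinitely often, and a play whose infinitely-often sets are the unions of those of two plays
lost by Player 0 is lost by Player 0. Live-group parity objectives are of this kind, since the top
priority seen infinitely often along such a play is seen infinitely often along one of the two.

Induct on the number of edges leaving Player-0 vertices. If Player 0 never has a choice, the game
is trivially determined. Otherwise split the edges at a Player-0 vertex `u` into `u → w₀` and the
rest. If Player 0 wins positionally from `v` in one of the two subgames, she wins in `G`. Otherwise
Player 1 wins from `v` in both. If Player 0 wins positionally from `u` in the second subgame, the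
winning plays of Player 1 from `v` there never visit `u`, so they are plays of `G`. Otherwise
Player 1 also wins from `u` in the second subgame, and in `G` he plays each of his two strategies
on the moves made since an exit from `u` to its side: the play is then an interleaving of two
plays, one per subgame, each lost by Player 0.
-/

open Nat

section InfinitelyOften

variable {α : Type*}

theorem InfOft.of_comp_strictMono {f : ℕ → α} {q : ℕ → ℕ} (hq : StrictMono q) {x : α}
    (h : InfOft (f ∘ q) x) : InfOft f x := fun n =>
  let ⟨m, hm, hx⟩ := h n
  ⟨q m, hm.trans hq.le_apply, hx⟩

theorem InfOft.comp_nth {f : ℕ → α} {p : ℕ → Prop} {x : α}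
    (h : ∀ n, ∃ k, n ≤ k ∧ p k ∧ f k = x) : InfOft (f ∘ nth p) x := by
  have hp : {k | p k}.Infinite :=
    Set.infinite_of_forall_exists_gt fun n => (h (n + 1)).imp fun k hk => ⟨hk.2.1, hk.1⟩
  intro n
  obtain ⟨k, hk, hpk, hx⟩ := h (nth p n)
  classical
  refine ⟨count p k, ?_, by simp [nth_count hpk, hx]⟩
  rwa [← nth_le_nth hp, nth_count hpk]

theorem infOft_shift_iff {f : ℕ → α} {x : α} (k : ℕ) :
    InfOft (fun j => f (k + j)) x ↔ InfOft f x := by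
  refine ⟨fun h n => ?_, fun h n => ?_⟩
  · obtain ⟨j, hj, hx⟩ := h n
    exact ⟨k + j, by omega, hx⟩
  · obtain ⟨j, hj, hx⟩ := h (k + n)
    exact ⟨j - k, by omega, by simpa only [Nat.add_sub_cancel' (by omega : k ≤ j)]⟩

theorem infOft_iff_exists_comp_nth {f : ℕ → α} {P : Bool → ℕ → Prop} (hP : ∀ j, ∃ b, P b j)
    {x : α} : InfOft f x ↔ ∃ b, {j | P b j}.Infinite ∧ InfOft (f ∘ nth (P b)) x := by
  constructor
  · intro h
    have hfreq : ∃ᶠ k in Filter.atTop, ∃ b, P b k ∧ f k = x :=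
      Filter.frequently_atTop.2 fun n =>
        let ⟨k, hk, hx⟩ := h n
        let ⟨b, hb⟩ := hP k
        ⟨k, hk, b, hb, hx⟩
    simp only [Bool.exists_bool, Filter.frequently_or_distrib] at hfreq
    rcases hfreq with hb | hb <;>
    · rw [Filter.frequently_atTop] at hb
      refine ⟨_, Set.infinite_of_forall_exists_gt fun n => ?_, InfOft.comp_nth hb⟩
      obtain ⟨k, hk, hpk, -⟩ := hb (n + 1)
      exact ⟨k, hpk, by omega⟩
  · rintro ⟨b, hb, h⟩
    exact h.of_comp_strictMono (nth_strictMono hb)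

theorem filter_range_eq_ofFn_nth (p : ℕ → Prop) [DecidablePred p] (k : ℕ) :
    (List.range k).filter (fun j => decide (p j)) =
      List.ofFn fun i : Fin (count p k) => nth p i := by
  induction k with
  | zero => simp
  | succ k ih =>
    rw [List.range_succ, List.filter_append, ih, count_succ]
    by_cases hk : p k
    · rw [if_pos hk, List.ofFn_succ_last]
      simp [hk, nth_count hk]
    · simp [hk]

end InfinitelyOften

theorem edgeInfOft_iff {ρ : ℕ → V} {e : V × V} :
    EdgeInfOft ρ e ↔ InfOft (fun k => (ρ k, ρ (k + 1))) e := by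
  simp only [EdgeInfOft, InfOft, Prod.ext_iff]

def IsInfUnionClosed (L : Set (ℕ → V)) : Prop :=
  ∀ ρ ρ₁ ρ₂, (∀ x, InfOft ρ x ↔ InfOft ρ₁ x ∨ InfOft ρ₂ x) →
    (∀ e, EdgeInfOft ρ e ↔ EdgeInfOft ρ₁ e ∨ EdgeInfOft ρ₂ e) → ρ₁ ∈ L → ρ₂ ∈ L → ρ ∈ L

namespace IsInfUnionClosed

variable {L : Set (ℕ → V)}

theorem mem_of_infOft_iff (hL : IsInfUnionClosed L) {ρ ρ' : ℕ → V}
    (hv : ∀ x, InfOft ρ x ↔ InfOft ρ' x) (he : ∀ e, EdgeInfOft ρ e ↔ EdgeInfOft ρ' e)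
    (h : ρ' ∈ L) : ρ ∈ L :=
  hL ρ ρ' ρ' (by simpa using hv) (by simpa using he) h h

theorem shift_mem (hL : IsInfUnionClosed L) {ρ : ℕ → V} (h : ρ ∈ L) (k : ℕ) :
    (fun j => ρ (k + j)) ∈ L :=
  hL.mem_of_infOft_iff (fun _ => infOft_shift_iff k)
    (fun _ => by
      rw [edgeInfOft_iff, edgeInfOft_iff]
      exact infOft_shift_iff (f := fun j => (ρ j, ρ (j + 1))) k) h

theorem mem_of_interleave (hL : IsInfUnionClosed L) {ρ : ℕ → V} {P : Bool → ℕ → Prop}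
    (hP : ∀ j, ∃ b, P b j)
    (hstep : ∀ b, {j | P b j}.Infinite → ∀ m, ρ (nth (P b) (m + 1)) = ρ (nth (P b) m + 1))
    (hmem : ∀ b, {j | P b j}.Infinite → ρ ∘ nth (P b) ∈ L) : ρ ∈ L := by
  classical
  obtain ⟨b₀, hb₀⟩ : ∃ b, {j | P b j}.Infinite := by
    by_contra! h
    exact Set.infinite_univ ((Set.finite_iUnion h).subset
      fun j _ => Set.mem_iUnion.2 (hP j))
  -- replace a side played only finitely often by the other one
  let c b := if {j | P b j}.Infinite then b else b₀
  have hc : ∀ b, {j | P (c b) j}.Infinite := fun b => by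
    by_cases hb : {j | P b j}.Infinite <;> simp [c, hb, hb₀]
  have hthread : ∀ {α : Type u} (f : ℕ → α) (x : α),
      InfOft f x ↔ ∃ b, InfOft (f ∘ nth (P (c b))) x := by
    intro α f x
    rw [infOft_iff_exists_comp_nth hP]
    refine ⟨fun ⟨b, hb, h⟩ => ⟨b, by simpa [c, hb] using h⟩, fun ⟨b, h⟩ => ⟨c b, hc b, h⟩⟩
  refine hL ρ (ρ ∘ nth (P (c false))) (ρ ∘ nth (P (c true))) (fun x => ?_) (fun e => ?_)
    (hmem _ (hc _)) (hmem _ (hc _))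
  · rw [hthread ρ x, Bool.exists_bool]
  · have hedges : ∀ b, (fun k => ((ρ ∘ nth (P (c b))) k, (ρ ∘ nth (P (c b))) (k + 1))) =
        (fun k => (ρ k, ρ (k + 1))) ∘ nth (P (c b)) :=
      fun b => funext fun m => by simp [hstep _ (hc b) m]
    rw [edgeInfOft_iff, edgeInfOft_iff, edgeInfOft_iff, hedges, hedges, hthread _ e,
      Bool.exists_bool]

end IsInfUnionClosed

theorem isInfUnionClosed_compl_liveParity (Hc : Set (Set (V × V))) (P : V → ℕ) :
    IsInfUnionClosed {ρ : ℕ → V | psiGlive Hc ρ → ParityWin P ρ}ᶜ := by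
  intro ρ ρ₁ ρ₂ hv he h₁ h₂
  simp only [Set.mem_compl_iff, Set.mem_ofPred_eq, Classical.not_imp] at h₁ h₂ ⊢
  refine ⟨fun H hH ⟨x, hxH, hx⟩ => ?_, fun ⟨x, hx, heven, hmax⟩ => ?_⟩
  · rcases (hv x).1 hx with hx | hx
    · obtain ⟨e, heH, he'⟩ := h₁.1 H hH ⟨x, hxH, hx⟩
      exact ⟨e, heH, (he e).2 (Or.inl he')⟩
    · obtain ⟨e, heH, he'⟩ := h₂.1 H hH ⟨x, hxH, hx⟩
      exact ⟨e, heH, (he e).2 (Or.inr he')⟩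
  · -- the maximal priority seen infinitely often along `ρ` is seen so along `ρ₁` or `ρ₂`
    have key : ∀ ρ', ¬ ParityWin P ρ' → (∀ y, InfOft ρ' y → InfOft ρ y) → ¬ InfOft ρ' x :=
      fun ρ' hlose hsub hx' => hlose ⟨x, hx', heven, fun w hw => hmax w (hsub w hw)⟩
    rcases (hv x).1 hx with hx | hx
    · exact key ρ₁ h₁.2 (fun y hy => (hv y).2 (Or.inl hy)) hx
    · exact key ρ₂ h₂.2 (fun y hy => (hv y).2 (Or.inr hy)) hx

noncomputable def playOf (g : Strategy V) (v : V) : ℕ → V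
  | 0 => v
  | k + 1 => g (List.ofFn fun j : Fin k => playOf g v j) (playOf g v k)
decreasing_by all_goals omega

theorem playOf_zero (g : Strategy V) (v : V) : playOf g v 0 = v := by rw [playOf]

theorem playOf_succ (g : Strategy V) (v : V) (k : ℕ) :
    playOf g v (k + 1) = g (List.ofFn fun j : Fin k => playOf g v j) (playOf g v k) := by
  rw [playOf]

theorem playOf_eq_of_agree {g : Strategy V} {ρ : ℕ → V} {k : ℕ}
    (h : ∀ j < k, g (List.ofFn fun i : Fin j => ρ i) (ρ j) = ρ (j + 1)) :
    ∀ j ≤ k, playOf g (ρ 0) j = ρ j := by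
  intro j hj
  induction j using Nat.strong_induction_on with
  | _ j ih =>
    cases j with
    | zero => exact playOf_zero g _
    | succ j =>
      rw [playOf_succ, congrArg List.ofFn (funext fun i => ih i (by omega) (by omega)),
        ih j (by omega) (by omega), h j hj]

section Profile

variable {G : GameGraph V} {σ τ : Strategy V}

def jointStrategy (G : GameGraph V) (σ τ : Strategy V) : Strategy V :=
  fun h x => if G.owner x = 0 then σ h x else τ h x

theorem isPlay_playOf_joint (hσ : StratValid G 0 σ) (hτ : StratValid G 1 τ) (v : V) :
    IsPlay G (playOf (jointStrategy G σ τ) v) := by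
  intro k
  rw [playOf_succ, jointStrategy]
  split_ifs with h
  · exact hσ _ _ h
  · exact hτ _ _ (Fin.eq_one_of_ne_zero _ h)

theorem compliant_playOf_joint_zero (v : V) :
    Compliant G 0 σ (playOf (jointStrategy G σ τ) v) := fun k h => by
  rw [playOf_succ, jointStrategy, if_pos h]

theorem compliant_playOf_joint_one (v : V) :
    Compliant G 1 τ (playOf (jointStrategy G σ τ) v) := fun k h => by
  rw [playOf_succ, jointStrategy, if_neg (by rw [h]; decide)]

theorem WinsFrom.not_compl {W : Set (ℕ → V)} {v : V} (hσ : WinsFrom G 0 W σ v) :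
    ¬ WinsFrom G 1 Wᶜ τ v := fun hτ =>
  hτ.2 _ (isPlay_playOf_joint hσ.1 hτ.1 v) (compliant_playOf_joint_one v) (playOf_zero _ v)
    (hσ.2 _ (isPlay_playOf_joint hσ.1 hτ.1 v) (compliant_playOf_joint_zero v) (playOf_zero _ v))

end Profile

namespace GameGraph

noncomputable def someSucc (G : GameGraph V) (x : V) : V := (G.exists_succ x).choose

theorem edge_someSucc (G : GameGraph V) (x : V) : G.E x (G.someSucc x) :=
  (G.exists_succ x).choose_spec

def restrictAt (G : GameGraph V) (u : V) (D : V → Prop) (hD : ∃ y, G.E u y ∧ D y) :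
    GameGraph V where
  owner := G.owner
  E x y := G.E x y ∧ (x = u → D y)
  exists_succ x := by
    by_cases hx : x = u
    · subst hx
      exact hD.imp fun y hy => ⟨hy.1, fun _ => hy.2⟩
    · exact (G.exists_succ x).imp fun y hy => ⟨hy, fun h => absurd h hx⟩

noncomputable def numChoices (G : GameGraph V) : ℕ :=
  {e : V × V | G.owner e.1 = 0 ∧ G.E e.1 e.2}.ncard

variable {G : GameGraph V} {u : V} {D : V → Prop} {hD : ∃ y, G.E u y ∧ D y}

theorem numChoices_restrictAt_lt [Finite V] (hu : G.owner u = 0) {z : V} (hz : G.E u z)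
    (hDz : ¬ D z) : (G.restrictAt u D hD).numChoices < G.numChoices := by
  refine Set.ncard_lt_ncard ⟨fun e he => ⟨he.1, he.2.1⟩, fun hsub => ?_⟩ (Set.toFinite _)
  exact hDz ((hsub (a := (u, z)) ⟨hu, hz⟩).2.2 rfl)

end GameGraph

open GameGraph

theorem WinsFrom.of_restrictAt {G : GameGraph V} {u : V} {D : V → Prop}
    {hD : ∃ y, G.E u y ∧ D y} {W : Set (ℕ → V)} {σ : Strategy V} {x : V} (hu : G.owner u = 0)
    (h : WinsFrom (G.restrictAt u D hD) 0 W σ x) : WinsFrom G 0 W σ x := by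
  refine ⟨fun l y hy => (h.1 l y hy).1,
    fun ρ hρ hσ h0 => h.2 ρ (fun k => ⟨hρ k, fun hk => ?_⟩) hσ h0⟩
  have hk0 : G.owner (ρ k) = 0 := hk ▸ hu
  exact hσ k hk0 ▸ (h.1 _ _ hk0).2 hk

def HalfPosDetermined (G : GameGraph V) (W : Set (ℕ → V)) (v : V) : Prop :=
  (∃ σ, Positional σ ∧ WinsFrom G 0 W σ v) ∨ ∃ τ, WinsFrom G 1 Wᶜ τ v

theorem halfPosDetermined_of_unique_succ {G : GameGraph V}
    (hG : ∀ x y y', G.owner x = 0 → G.E x y → G.E x y' → y = y') (W : Set (ℕ → V)) (v : V) :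
    HalfPosDetermined G W v := by
  classical
  by_cases hwin : WinsFrom G 0 W (fun _ => G.someSucc) v
  · exact .inl ⟨_, fun _ _ _ => rfl, hwin⟩
  obtain ⟨ρ, hρ, -, h0, hlose⟩ : ∃ ρ, IsPlay G ρ ∧ Compliant G 0 (fun _ => G.someSucc) ρ ∧
      ρ 0 = v ∧ ρ ∉ W := by
    simpa [WinsFrom, StratValid, G.edge_someSucc] using hwin
  -- Player 1 replays `ρ`; Player 0 has no choice but to do the same.
  refine .inr ⟨fun l x => if G.E x (ρ (l.length + 1)) then ρ (l.length + 1) else G.someSucc x,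
    fun l x _ => ?_, fun ρ' hρ' hτ h0' => ?_⟩
  · dsimp only
    split_ifs with h
    exacts [h, G.edge_someSucc x]
  have hρρ' : ∀ k, ρ' k = ρ k := by
    intro k
    induction k with
    | zero => rw [h0, h0']
    | succ k ih =>
      rcases Fin.exists_fin_two.mp ⟨G.owner (ρ' k), rfl⟩ with h | h
      · exact hG _ _ _ h (hρ' k) (ih ▸ hρ k)
      · rw [hτ k h]
        simp only [List.length_ofFn, if_pos (ih ▸ hρ k)]
  rwa [funext hρρ']

-- The plays of `τ` from `v` never reach `u`, where Player 0 could switch to `π`.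
theorem WinsFrom.of_restrictAt_of_positional {G : GameGraph V} {u : V} {D : V → Prop}
    {hD : ∃ y, G.E u y ∧ D y} {W : Set (ℕ → V)} (hW : IsInfUnionClosed Wᶜ)
    {π τ : Strategy V} {v : V} (hπ : Positional π)
    (hπu : WinsFrom (G.restrictAt u D hD) 0 W π u)
    (hτ : WinsFrom (G.restrictAt u D hD) 1 Wᶜ τ v) : WinsFrom G 1 Wᶜ τ v := by
  classical
  set R := G.restrictAt u D hD
  have avoid : ∀ ρ, IsPlay G ρ → Compliant G 1 τ ρ → ρ 0 = v → ∀ k, ρ k ≠ u := by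
    intro ρ hρ hτρ h0 k₀ hk₀
    have hex : ∃ k, ρ k = u := ⟨k₀, hk₀⟩
    let k := Nat.find hex
    have hRk : ∀ j < k, R.E (ρ j) (ρ (j + 1)) := fun j hj =>
      ⟨hρ j, fun hju => absurd hju (Nat.find_min _ hj)⟩
    -- Player 0 replays `ρ` up to its first visit to `u`, then plays `π`.
    let σ : Strategy V := fun l x =>
      if l.length < k ∧ R.E x (ρ (l.length + 1)) then ρ (l.length + 1) else π l x
    have hσ : StratValid R 0 σ := fun l x hx => by
      dsimp only [σ]
      split_ifs with h
      exacts [h.2, hπu.1 l x hx]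
    let ρ' := playOf (jointStrategy R σ τ) v
    have hρ' : ∀ j ≤ k, ρ' j = ρ j := by
      show ∀ j ≤ k, playOf (jointStrategy R σ τ) v j = ρ j
      rw [← h0]
      refine playOf_eq_of_agree fun j hj => ?_
      unfold jointStrategy
      split_ifs with hj0
      · simp only [σ, List.length_ofFn, if_pos (And.intro hj (hRk j hj))]
      · exact (hτρ j (Fin.eq_one_of_ne_zero _ hj0)).symm
    have hlose : ρ' ∉ W :=
      hτ.2 ρ' (isPlay_playOf_joint hσ hτ.1 v) (compliant_playOf_joint_one v) (playOf_zero _ v)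
    refine hW.shift_mem hlose k (hπu.2 _ (fun j => isPlay_playOf_joint hσ hτ.1 v (k + j))
      (fun j hj => ?_) ((hρ' k le_rfl).trans (Nat.find_spec hex)))
    change ρ' (k + j + 1) = _
    rw [show ρ' (k + j + 1) = _ from playOf_succ _ _ _, jointStrategy, if_pos hj]
    simp only [σ, List.length_ofFn, show ¬ k + j < k by omega, false_and, if_false]
    exact hπ _ _ _
  refine ⟨fun l x hx => (hτ.1 l x hx).1, fun ρ hρ hτρ h0 => hτ.2 ρ ?_ hτρ h0⟩
  exact fun k => ⟨hρ k, fun hk => absurd hk (avoid ρ hρ hτρ h0 k)⟩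

section Switching

variable [DecidableEq V] (u w₀ : V)

/-- Whether the last exit from `u` before position `j` went to `w₀` (`true` if there was none). -/
def exitSide (ρ : ℕ → V) : ℕ → Bool
  | 0 => true
  | j + 1 => if ρ j = u then decide (ρ (j + 1) = w₀) else exitSide ρ j

-- `j` indexes the move from `ρ j` to `ρ (j + 1)`.
def MoveOnSide (ρ : ℕ → V) (b : Bool) (j : ℕ) : Prop := exitSide u w₀ ρ (j + 1) = b

instance (ρ : ℕ → V) (b : Bool) : DecidablePred (MoveOnSide u w₀ ρ b) :=
  fun _ => inferInstanceAs (Decidable (_ = _))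

def sideHistory (ρ : ℕ → V) (b : Bool) (k : ℕ) : List V :=
  ((List.range k).filter fun j => decide (MoveOnSide u w₀ ρ b j)).map ρ

def switchStrategy (τ : Bool → Strategy V) : Strategy V := fun l x =>
  -- only the first `l.length + 1` values of `ρ` matter
  let ρ := fun i => (l ++ [x]).getD i x
  τ (exitSide u w₀ ρ l.length) (sideHistory u w₀ ρ (exitSide u w₀ ρ l.length) l.length) x

variable {u w₀} {ρ : ℕ → V}

theorem exitSide_succ_of_ne {j : ℕ} (h : ρ j ≠ u) :
    exitSide u w₀ ρ (j + 1) = exitSide u w₀ ρ j := by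
  simp [exitSide, h]

theorem eq_of_exitSide_ne {j : ℕ} (h : exitSide u w₀ ρ (j + 1) ≠ exitSide u w₀ ρ j) :
    ρ j = u := by
  by_contra hj
  exact h (exitSide_succ_of_ne hj)

theorem exitSide_congr {ρ' : ℕ → V} {k : ℕ} (h : ∀ i ≤ k, ρ i = ρ' i) :
    ∀ j ≤ k, exitSide u w₀ ρ j = exitSide u w₀ ρ' j := by
  intro j hj
  induction j with
  | zero => rfl
  | succ j ih => simp only [exitSide, h j (by omega), h (j + 1) hj, ih (by omega)]

theorem sideHistory_congr {ρ' : ℕ → V} {k : ℕ} (h : ∀ i ≤ k, ρ i = ρ' i) (b : Bool) :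
    sideHistory u w₀ ρ b k = sideHistory u w₀ ρ' b k := by
  have hk : ∀ j ∈ List.range k, j + 1 ≤ k := fun j hj => List.mem_range.1 hj
  rw [sideHistory, sideHistory, List.filter_congr (q := fun j => decide (MoveOnSide u w₀ ρ' b j))
    fun j hj => decide_eq_decide.2 <| by
      rw [MoveOnSide, MoveOnSide, exitSide_congr h (j + 1) (hk j hj)]]
  exact List.map_congr_left fun j hj => h j (by simp at hj; omega)

theorem switchStrategy_apply (τ : Bool → Strategy V) (k : ℕ) :
    switchStrategy u w₀ τ (List.ofFn fun i : Fin k => ρ i) (ρ k) =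
      τ (exitSide u w₀ ρ k) (sideHistory u w₀ ρ (exitSide u w₀ ρ k) k) (ρ k) := by
  have hρ : ∀ i ≤ k, ((List.ofFn fun i : Fin k => ρ i) ++ [ρ k]).getD i (ρ k) = ρ i := by
    intro i hi
    rcases hi.lt_or_eq with hi | rfl
    · rw [List.getD_append _ _ _ _ (by simpa using hi),
        List.getD_eq_getElem _ _ (by simpa using hi), List.getElem_ofFn]
    · simp
  simp only [switchStrategy, List.length_ofFn, exitSide_congr hρ k le_rfl,
    sideHistory_congr hρ]

variable (u w₀) in
noncomputable def sideThread (ρ : ℕ → V) (b : Bool) : ℕ → V := ρ ∘ nth (MoveOnSide u w₀ ρ b)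

variable {b : Bool} (hinf : {j | MoveOnSide u w₀ ρ b j}.Infinite)
include hinf

/-- Consecutive moves of a side are adjacent, or separated by an excursion from `u` to `u`. -/
theorem sideThread_succ (m : ℕ) :
    sideThread u w₀ ρ b (m + 1) = ρ (nth (MoveOnSide u w₀ ρ b) m + 1) := by
  set p := MoveOnSide u w₀ ρ b
  have hlt : nth p m < nth p (m + 1) := (nth_lt_nth hinf).2 (lt_add_one m)
  have hpm : p (nth p m) := nth_mem_of_infinite hinf m
  have hpm' : p (nth p (m + 1)) := nth_mem_of_infinite hinf (m + 1)
  have hgap : ∀ j, nth p m < j → j < nth p (m + 1) → ¬ p j := fun j h₁ h₂ hj =>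
    (le_nth_of_lt_nth_succ h₂ hj).not_gt h₁
  rcases (Nat.succ_le_of_lt hlt).eq_or_lt with h | h
  · simp [sideThread, p, ← h]
  obtain ⟨j, hj⟩ : ∃ j, nth p (m + 1) = j + 1 := ⟨nth p (m + 1) - 1, by omega⟩
  have hleave : ρ (nth p m + 1) = u := eq_of_exitSide_ne (w₀ := w₀) fun he =>
    hgap _ (lt_add_one _) h (he.trans hpm)
  have hpj : p (j + 1) := hj ▸ hpm'
  have hreturn : ρ (j + 1) = u := eq_of_exitSide_ne (w₀ := w₀) fun he =>
    hgap j (by omega) (by omega) (he.symm.trans hpj)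
  change ρ (nth p (m + 1)) = ρ (nth p m + 1)
  rw [hj, hreturn, hleave]

theorem sideThread_zero : sideThread u w₀ ρ b 0 = cond b (ρ 0) u := by
  set p := MoveOnSide u w₀ ρ b
  have hp0 : p (nth p 0) := nth_mem_of_infinite hinf 0
  have hmin : ∀ j < nth p 0, ¬ p j := fun j hj hpj =>
    (Nat.sInf_le (show j ∈ {j | p j} from hpj)).not_gt (nth_zero (p := p) ▸ hj)
  change ρ (nth p 0) = cond b (ρ 0) u
  rcases Nat.eq_zero_or_pos (nth p 0) with h0 | hpos
  · rw [h0] at hp0 ⊢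
    cases b
    · exact eq_of_exitSide_ne (w₀ := w₀) fun he => Bool.false_ne_true (hp0.symm.trans he)
    · rfl
  obtain ⟨j, hj⟩ : ∃ j, nth p 0 = j + 1 := ⟨nth p 0 - 1, by omega⟩
  have hu : ρ (j + 1) = u := eq_of_exitSide_ne (w₀ := w₀) fun he =>
    hmin j (by omega) (he.symm.trans (hj ▸ hp0))
  rw [hj, hu]
  cases b
  · rfl
  · exact (eq_of_exitSide_ne (w₀ := w₀) (j := 0) fun he => hmin 0 hpos he).symm

theorem isPlay_sideThread {G : GameGraph V} {hD : ∃ y, G.E u y ∧ decide (y = w₀) = b}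
    (hρ : IsPlay G ρ) : IsPlay (G.restrictAt u (fun y => decide (y = w₀) = b) hD)
      (sideThread u w₀ ρ b) := by
  intro m
  rw [sideThread_succ hinf]
  have hside : MoveOnSide u w₀ ρ b (nth (MoveOnSide u w₀ ρ b) m) := nth_mem_of_infinite hinf m
  refine ⟨hρ _, fun hu => ?_⟩
  simpa [MoveOnSide, exitSide, show ρ (nth (MoveOnSide u w₀ ρ b) m) = u from hu] using hside

theorem sideHistory_nth (m : ℕ) :
    sideHistory u w₀ ρ b (nth (MoveOnSide u w₀ ρ b) m) =
      List.ofFn fun i : Fin m => sideThread u w₀ ρ b i := by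
  rw [sideHistory, filter_range_eq_ofFn_nth, count_nth_of_infinite hinf, List.map_ofFn]
  rfl

theorem compliant_sideThread {G : GameGraph V} {hD : ∃ y, G.E u y ∧ decide (y = w₀) = b}
    {τ : Bool → Strategy V} (hu : G.owner u = 0)
    (hρ : Compliant G 1 (switchStrategy u w₀ τ) ρ) :
    Compliant (G.restrictAt u (fun y => decide (y = w₀) = b) hD) 1 (τ b)
      (sideThread u w₀ ρ b) := by
  intro m hm
  set j := nth (MoveOnSide u w₀ ρ b) m
  replace hm : G.owner (ρ j) = 1 := hm
  have hj : ρ j ≠ u := fun h => absurd (hu.symm.trans (h ▸ hm)) (by decide)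
  have hside : exitSide u w₀ ρ j = b :=
    (exitSide_succ_of_ne hj).symm.trans (nth_mem_of_infinite hinf m)
  rw [sideThread_succ hinf, hρ j hm, switchStrategy_apply, hside, sideHistory_nth hinf]
  rfl

end Switching

theorem winsFrom_switchStrategy [DecidableEq V] {G : GameGraph V} {W : Set (ℕ → V)}
    (hW : IsInfUnionClosed Wᶜ) {u w₀ v : V} (hu : G.owner u = 0)
    {hD : ∀ b, ∃ y, G.E u y ∧ decide (y = w₀) = b} {τ : Bool → Strategy V}
    (hτ : ∀ b, WinsFrom (G.restrictAt u (fun y => decide (y = w₀) = b) (hD b)) 1 Wᶜ (τ b)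
      (cond b v u)) :
    WinsFrom G 1 Wᶜ (switchStrategy u w₀ τ) v := by
  refine ⟨fun l x hx => ((hτ _).1 _ x hx).1, fun ρ hρ hτρ h0 => ?_⟩
  refine hW.mem_of_interleave (P := MoveOnSide u w₀ ρ) (fun j => ⟨_, rfl⟩)
    (fun b hb m => sideThread_succ hb m) fun b hb => ?_
  refine (hτ b).2 _ (isPlay_sideThread hb hρ) (compliant_sideThread hb hu hτρ) ?_
  change sideThread u w₀ ρ b 0 = _
  rw [sideThread_zero hb, h0]

theorem halfPosDetermined [Finite V] {W : Set (ℕ → V)} (hW : IsInfUnionClosed Wᶜ)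
    (G : GameGraph V) (v : V) : HalfPosDetermined G W v := by
  classical
  induction hn : G.numChoices using Nat.strong_induction_on generalizing G v with
  | _ n ih =>
  by_cases hchoice : ∃ u w₀ y, G.owner u = 0 ∧ G.E u w₀ ∧ G.E u y ∧ y ≠ w₀
  swap
  · push Not at hchoice
    exact halfPosDetermined_of_unique_succ
      (fun x y y' hx hy hy' => (hchoice x y y' hx hy hy').symm) W v
  obtain ⟨u, w₀, y, hu, hw₀, hy, hne⟩ := hchoice
  have hD : ∀ b, ∃ y, G.E u y ∧ decide (y = w₀) = b := by
    rintro (_ | _)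
    exacts [⟨y, hy, by simpa using hne⟩, ⟨w₀, hw₀, by simp⟩]
  have IH : ∀ b x,
      HalfPosDetermined (G.restrictAt u (fun y => decide (y = w₀) = b) (hD b)) W x := by
    refine fun b x => ih _ ?_ _ x rfl
    rcases b with _ | _
    exacts [hn ▸ numChoices_restrictAt_lt hu hw₀ (by simp),
      hn ▸ numChoices_restrictAt_lt hu hy (by simpa using hne)]
  rcases IH true v with ⟨σ, hσ, hwin⟩ | ⟨τ₁, hτ₁⟩
  · exact .inl ⟨σ, hσ, hwin.of_restrictAt hu⟩
  rcases IH false v with ⟨σ, hσ, hwin⟩ | ⟨τ₀, hτ₀⟩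
  · exact .inl ⟨σ, hσ, hwin.of_restrictAt hu⟩
  rcases IH false u with ⟨π, hπ, hπu⟩ | ⟨τ₀', hτ₀'⟩
  · exact .inr ⟨τ₀, WinsFrom.of_restrictAt_of_positional hW hπ hπu hτ₀⟩
  · refine .inr ⟨_, winsFrom_switchStrategy hW hu (w₀ := w₀) (hD := hD)
      (τ := fun b => cond b τ₁ τ₀') ?_⟩
    rintro (_ | _)
    exacts [hτ₀', hτ₁]

theorem exists_positional_winsFrom [Finite V] {W : Set (ℕ → V)} (hW : IsInfUnionClosed Wᶜ)
    (G : GameGraph V) (v : V) (h : ∃ σ, WinsFrom G 0 W σ v) :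
    ∃ σ, Positional σ ∧ WinsFrom G 0 W σ v :=
  (halfPosDetermined hW G v).resolve_right fun ⟨_, hτ⟩ =>
    let ⟨_, hσ⟩ := h
    hσ.not_compl hτ

theorem stmt4 (V : Type) [Fintype V] (G : GameGraph V)
    (P : V → ℕ)
    (Hc : Set (Set (V × V)))
    (v : V)
    (hwin : ∃ σ, WinsFrom G 0 {ρ | psiGlive Hc ρ → ParityWin P ρ} σ v) :
    ∃ σ, Positional σ ∧ WinsFrom G 0 {ρ | psiGlive Hc ρ → ParityWin P ρ} σ v :=
  exists_positional_winsFrom (isInfUnionClosed_compl_liveParity Hc P) G v hwin
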